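/- Let 0 → A → E → B → 0 be a split extension of groups with action on themselves with section j, with derived actions b·a = j(b)+a-j(b), b^a = j(b)^a - j(b), a^b = a^{j(b)}. Then (b^{(b'·a)})^{b'} = (b^{b'})^a for all a ∈ A, b, b' ∈ B. -/

import Mathlib

/-- A group with action on itself: a (not necessarily abelian) additive group `G`
with a map `act g h = g^h` satisfying `g^(h+h') = (g^h)^{h'}`, `g^0 = g`,
`(g+g')^h = g^h + g'^h`. -/
class Gwa (G : Type*) extends AddGroup G where
  act : G → G → G
  act_add : ∀ g h h' : G, act g (h + h') = act (act g h) h'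
  act_zero : ∀ g : G, act g 0 = g
  add_act : ∀ g g' h : G, act (g + g') h = act g h + act g' h

open Gwa

/-- Morphisms of groups with action on themselves. -/
def IsGwaHom {G H : Type*} [Gwa G] [Gwa H] (f : G → H) : Prop :=
  (∀ a b : G, f (a + b) = f a + f b) ∧ ∀ a b : G, f (act a b) = act (f a) (f b)


lemma zero_act {G : Type*} [Gwa G] (h : G) : act (0:G) h = 0 := by
  have := add_act (0:G) 0 h
  simp only [add_zero] at this
  exact left_eq_add.mp this

lemma neg_act {G : Type*} [Gwa G] (g h : G) : act (-g) h = - act g h := by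
  have := add_act g (-g) h
  rw [add_neg_cancel, zero_act] at this
  exact eq_neg_of_add_eq_zero_right this.symm

theorem cond4B {A E B : Type*} [Gwa A] [Gwa E] [Gwa B]
    (i : A → E) (p : E → B) (j : B → E)
    (hi : IsGwaHom i) (hp : IsGwaHom p) (hj : IsGwaHom j)
    (hinj : Function.Injective i) (hsurj : Function.Surjective p)
    (hker : ∀ e : E, p e = 0 ↔ ∃ a : A, i a = e)
    (hpj : ∀ b : B, p (j b) = b)
    (dot : B → A → A) (astB : B → A → A) (actA : A → B → A)
    (hdot : ∀ (b : B) (a : A), i (dot b a) = j b + i a - j b)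
    (hast : ∀ (b : B) (a : A), i (astB b a) = act (j b) (i a) - j b)
    (hactA : ∀ (a : A) (b : B), i (actA a b) = act (i a) (j b)) :
    ∀ (b b' : B) (a : A), actA (astB b (dot b' a)) b' = astB (act b b') a := by
  intro b b' a
  apply hinj
  rw [hactA, hast, hdot, hast, hj.2, sub_eq_add_neg (act (j b) (j b' + i a - j b')) (j b),
    add_act, neg_act, ← sub_eq_add_neg, ← act_add, sub_add_cancel, ← act_add]
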